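/- arXiv:1307.6747 — 7 statements merged into one kernel-verified Lean document; each statement's English description precedes it below -/
import Mathlib

section
/- Let V be a finite set of nodes, each node v having a distinct position h(v) ∈ [0,1) and distinct capacity c(v) > 0. Define succ⁺₁(u) as the node of smallest position among {v : h(v) > h(u) ∧ c(v) > c(u)} (if it exists), and pred⁺₁(v) as the node of largest position among {w : h(w) < h(v) ∧ c(w) > c(v)} (if it exists), and let S⁻(u) = {v : u = pred⁺₁(v)}. Let w be the element of S⁻(u) with smallest position. Then every element of S⁻(u) other than w belongs to S⁺(w), where S⁺(w) is the set obtained by iterating succ⁺₁ starting from w. -/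
/-- `IsSucc h c u v` means `v = succ⁺₁(u)`: the node of smallest position among
the nodes to the right of `u` with larger capacity. -/
def IsSucc {V : Type*} (h c : V → ℝ) (u v : V) : Prop :=
  h u < h v ∧ c u < c v ∧ ∀ w, h u < h w → c u < c w → h v ≤ h w

/-- `IsPred h c v u` means `u = pred⁺₁(v)`: the node of largest position among
the nodes to the left of `v` with larger capacity. -/
def IsPred {V : Type*} (h c : V → ℝ) (v u : V) : Prop :=
  h u < h v ∧ c v < c u ∧ ∀ w, h w < h v → c v < c w → h w ≤ h u

private lemma exists_isSucc {V : Type*} [Fintype V] (h c : V → ℝ)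
    (v x : V) (hx1 : h v < h x) (hx2 : c v < c x) :
    ∃ s, IsSucc h c v s := by
  classical
  set T : Finset V := Finset.univ.filter (fun y => h v < h y ∧ c v < c y) with hT
  have hxT : x ∈ T := by simp [hT, hx1, hx2]
  obtain ⟨s, hsT, hsmin⟩ := T.exists_min_image h ⟨x, hxT⟩
  simp only [hT, Finset.mem_filter] at hsT
  refine ⟨s, hsT.2.1, hsT.2.2, fun y hy1 hy2 => hsmin y ?_⟩
  simp [hT, hy1, hy2]

private lemma aux_chain {V : Type*} [Fintype V] (h c : V → ℝ)
    (hinj : Function.Injective h) (cinj : Function.Injective c)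
    (u x : V) (hx : IsPred h c x u) :
    ∀ n : ℕ, ∀ v : V,
      (Finset.univ.filter (fun y => h v < h y ∧ h y ≤ h x)).card ≤ n →
      h u < h v → h v < h x → c v < c x →
      Relation.TransGen (IsSucc h c) v x := by
  classical
  intro n
  induction n with
  | zero =>
    intro v hcard huv hvx hcvx
    exfalso
    have : x ∈ Finset.univ.filter (fun y => h v < h y ∧ h y ≤ h x) := by
      simp [hvx]
    have := Finset.card_pos.mpr ⟨x, this⟩
    omega
  | succ n ih =>
    intro v hcard huv hvx hcvx
    obtain ⟨s, hs⟩ := exists_isSucc h c v x hvx hcvx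
    have hsx : h s ≤ h x := hs.2.2 x hvx hcvx
    rcases eq_or_lt_of_le hsx with heq | hlt
    · have : s = x := hinj heq
      subst this
      exact Relation.TransGen.single hs
    · -- s ≠ x, so c s < c x
      have hus : h u < h s := huv.trans hs.1
      have hcsx : c s < c x := by
        rcases lt_trichotomy (c s) (c x) with h1 | h1 | h1
        · exact h1
        · exact absurd (cinj h1) (fun e => by rw [e] at hlt; exact lt_irrefl _ hlt)
        · have := hx.2.2 s hlt h1
          exact absurd (hus.trans_le this) (lt_irrefl _)
      have hsub : Finset.univ.filter (fun y => h s < h y ∧ h y ≤ h x) ⊂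
          Finset.univ.filter (fun y => h v < h y ∧ h y ≤ h x) := by
        refine Finset.ssubset_iff_of_subset ?_ |>.mpr ?_
        · intro y hy
          simp only [Finset.mem_filter, Finset.mem_univ, true_and] at hy ⊢
          exact ⟨hs.1.trans hy.1, hy.2⟩
        · exact ⟨s, by simp [hs.1, hsx], by simp⟩
      have hcard' : (Finset.univ.filter (fun y => h s < h y ∧ h y ≤ h x)).card ≤ n := by
        have := Finset.card_lt_card hsub
        omega
      exact Relation.TransGen.head hs (ih s hcard' hus hlt hcsx)

/-- Let `w` be the leftmost element of `S⁻(u) = {v : pred⁺₁(v) = u}`.  Every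
other element of `S⁻(u)` belongs to `S⁺(w)`, the set obtained by iterating
`succ⁺₁` from `w`. -/
theorem sminus_subset_splus_of_leftmost {V : Type*} [Fintype V]
    (h c : V → ℝ) (hinj : Function.Injective h) (cinj : Function.Injective c)
    (hrange : ∀ v, h v ∈ Set.Ico (0 : ℝ) 1) (cpos : ∀ v, 0 < c v)
    (u w : V) (hw : IsPred h c w u)
    (hwmin : ∀ v, IsPred h c v u → h w ≤ h v) :
    ∀ x, IsPred h c x u → x ≠ w → Relation.TransGen (IsSucc h c) w x := by
  classical
  intro x hx hxw
  have hwx : h w < h x := by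
    rcases eq_or_lt_of_le (hwmin x hx) with heq | hlt
    · exact absurd (hinj heq).symm hxw
    · exact hlt
  have hcwx : c w < c x := by
    rcases lt_trichotomy (c w) (c x) with h1 | h1 | h1
    · exact h1
    · exact absurd (cinj h1).symm hxw
    · have := hx.2.2 w hwx h1
      exact absurd (hw.1.trans_le this) (lt_irrefl _)
  exact aux_chain h c hinj cinj u x hx _ w le_rfl hw.1 hwx hcwx
end

section
/- Under the logarithmic capacity functions C_u(x) = (1/c(u))·(−log(1 − ((x − h(u)) mod 1))) with node positions i.i.d. uniform on [0,1) and a data element hashed uniformly to [0,1), the probability that the data element is assigned to node u equals c(u)/Σ_{v∈V} c(v). Hence the expected fraction of data stored at u is proportional to its capacity. -/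
/-!
For a fixed data hash `x`, the offsets `fract (x - h v)` are again i.i.d. uniform on `[0,1)`, and
`-log (1 - U) / c v` turns a uniform `U` into an exponential variable of rate `c v`; the theorem is
the classical fact that `u` wins such a race with probability `c u / ∑ v, c v`. In uniform
coordinates: given the offset `t` of `u`, node `v` loses iff its offset exceeds
`1 - (1 - t) ^ (c v / c u)`, which has probability `(1 - t) ^ (c v / c u)`, and
`∫₀¹ (1 - t) ^ K dt = 1 / (K + 1)` with `K = ∑_{v ≠ u} c v / c u`.
-/

open MeasureTheory Set

theorem measurePreserving_fract_const_sub (x : ℝ) :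
    MeasurePreserving (fun t : ℝ => Int.fract (x - t))
      (volume.restrict (Ico 0 1)) (volume.restrict (Ico 0 1)) := by
  have hm : Measurable fun t : ℝ => Int.fract (x - t) := by fun_prop
  refine ⟨hm, Measure.ext fun A hA => ?_⟩
  have hfA : MeasurableSet (Int.fract ⁻¹' A) := measurable_fract hA
  have hinv : ∀ g : AddSubgroup.zmultiples (1 : ℝ),
      (fun y => g +ᵥ y) ⁻¹' (Int.fract ⁻¹' A) = Int.fract ⁻¹' A := by
    rintro ⟨_, n, rfl⟩
    ext y
    simp [Int.fract_intCast_add]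
  have hsub : (fun t => x - t) ⁻¹' (Int.fract ⁻¹' A ∩ Ioc (x - 1) (x - 1 + 1)) =
      (fun t => Int.fract (x - t)) ⁻¹' A ∩ Ico 0 1 := by
    ext t; simp
  calc _ = volume ((fun t => Int.fract (x - t)) ⁻¹' A ∩ Ico 0 1) := by
          rw [Measure.map_apply hm hA, Measure.restrict_apply (hm hA)]
    _ = volume (Int.fract ⁻¹' A ∩ Ioc (x - 1) (x - 1 + 1)) := by
          rw [← hsub, (Measure.measurePreserving_sub_left volume x).measure_preimage
            (hfA.inter measurableSet_Ioc).nullMeasurableSet]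
    _ = volume (Int.fract ⁻¹' A ∩ Ioc 0 (0 + 1)) :=
          (isAddFundamentalDomain_Ioc one_pos _).measure_set_eq
            (isAddFundamentalDomain_Ioc one_pos _) hfA hinv
    _ = volume (Int.fract ⁻¹' A ∩ Ico 0 1) := by
          rw [zero_add]; exact measure_congr (ae_eq_refl _ |>.inter Ico_ae_eq_Ioc.symm)
    _ = _ := by
          rw [Measure.restrict_apply hA]
          congr 1
          exact Set.ext fun t => and_congr_left fun ht => by
            rw [mem_preimage, Int.fract_eq_self.2 ht]

theorem volume_restrict_Ico_Ioi {b : ℝ} (hb : 0 ≤ b) :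
    volume.restrict (Ico (0 : ℝ) 1) (Ioi b) = ENNReal.ofReal (1 - b) := by
  have hIoo : Ioi b ∩ Ico 0 1 = Ioo b 1 := by
    ext t
    simp only [mem_inter_iff, mem_Ioi, mem_Ico, mem_Ioo]
    grind
  rw [Measure.restrict_apply measurableSet_Ioi, hIoo, Real.volume_Ioo]

theorem lintegral_Ico_one_sub_rpow {K : ℝ} (hK : -1 < K) :
    ∫⁻ t in Ico (0 : ℝ) 1, ENNReal.ofReal ((1 - t) ^ K) = ENNReal.ofReal (1 / (K + 1)) := by
  have hflip : MeasurePreserving (fun t : ℝ => 1 - t)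
      (volume.restrict (Ico 0 1)) (volume.restrict (Ioc 0 1)) := by
    have := (Measure.measurePreserving_sub_left volume (1 : ℝ)).restrict_preimage
      (measurableSet_Ioc (a := (0 : ℝ)) (b := 1))
    simpa using this
  rw [hflip.lintegral_comp (f := fun s => ENNReal.ofReal (s ^ K)) (by fun_prop),
    ← ofReal_integral_eq_lintegral_ofReal, ← intervalIntegral.integral_of_le zero_le_one,
    integral_rpow (Or.inl hK), Real.one_rpow, Real.zero_rpow (by linarith)]
  · simp
  · exact (intervalIntegral.intervalIntegrable_rpow' hK).1
  · filter_upwards [ae_restrict_mem measurableSet_Ioc] with s hs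
    exact Real.rpow_nonneg hs.1.le K

theorem measure_pi_setOf_forall_ne {ι α : Type*} [Fintype ι] [DecidableEq ι]
    [MeasurableSpace α] (μ : ι → Measure α) [∀ i, SigmaFinite (μ i)] (u : ι)
    {S : ι → Set (α × α)} (hS : ∀ i, MeasurableSet (S i)) :
    Measure.pi μ {a | ∀ v, v ≠ u → (a u, a v) ∈ S v} =
      ∫⁻ t, ∏ v ∈ Finset.univ.erase u, μ v (Prod.mk t ⁻¹' S v) ∂μ u := by
  set e := MeasurableEquiv.piEquivPiSubtypeProd (fun _ : ι => α) (· = u)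
  set s : Set (({v // v = u} → α) × ({v // ¬ v = u} → α)) :=
    {y | ∀ w : {v // ¬ v = u}, (y.1 default, y.2 w) ∈ S w}
  have hs : MeasurableSet s := by
    simp only [s, ofPred_forall]
    exact MeasurableSet.iInter fun w => (hS w).preimage (by fun_prop)
  have he : {a : ι → α | ∀ v, v ≠ u → (a u, a v) ∈ S v} = e ⁻¹' s := by
    ext a
    exact ⟨fun h w => h w w.2, fun h v hv => h ⟨v, hv⟩⟩
  have hslice : ∀ y : {v // v = u} → α, Prod.mk y ⁻¹' s =
      univ.pi fun w : {v // ¬ v = u} => Prod.mk (y default) ⁻¹' S w := by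
    intro y; ext z; simp [s]
  rw [he, (measurePreserving_piEquivPiSubtypeProd μ _).measure_preimage hs.nullMeasurableSet,
    Measure.prod_apply hs]
  simp_rw [hslice, Measure.pi_pi]
  have hprod : ∀ t : α, ∏ w : {v // ¬ v = u}, μ w (Prod.mk t ⁻¹' S w) =
      ∏ v ∈ Finset.univ.erase u, μ v (Prod.mk t ⁻¹' S v) := fun t =>
    (Finset.prod_subtype (Finset.univ.erase u) (fun v => by simp)
      fun v => μ v (Prod.mk t ⁻¹' S v)).symm
  simp_rw [hprod]
  -- `convert` rather than `exact`: the `Fintype {v // v = u}` instance in the goal is not the one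
  -- that `measurePreserving_piUnique` finds through `Unique`.
  convert (measurePreserving_piUnique fun i : {v // v = u} => μ i).lintegral_comp_emb
    (MeasurableEquiv.measurableEmbedding _)
    (fun t => ∏ v ∈ Finset.univ.erase u, μ v (Prod.mk t ⁻¹' S v)) using 3 <;> rfl

theorem one_div_mul_neg_log_one_sub_lt_iff {cu cv a b : ℝ} (hcu : 0 < cu) (hcv : 0 < cv)
    (ha : a < 1) (hb : b < 1) :
    (1 / cu) * (-Real.log (1 - a)) < (1 / cv) * (-Real.log (1 - b)) ↔
      1 - (1 - a) ^ (cv / cu) < b := by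
  have ha' : 0 < 1 - a := sub_pos.2 ha
  calc (1 / cu) * (-Real.log (1 - a)) < (1 / cv) * (-Real.log (1 - b))
      ↔ Real.log (1 - b) < cv / cu * Real.log (1 - a) := by
        rw [one_div_mul_eq_div, one_div_mul_eq_div, div_lt_div_iff₀ hcu hcv, div_mul_eq_mul_div,
          lt_div_iff₀ hcu]
        constructor <;> intro h <;> linarith
    _ ↔ 1 - b < (1 - a) ^ (cv / cu) := by
        rw [← Real.log_rpow ha', Real.log_lt_log_iff (sub_pos.2 hb) (Real.rpow_pos_of_pos ha' _)]
    _ ↔ 1 - (1 - a) ^ (cv / cu) < b := by constructor <;> intro h <;> linarith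

theorem measure_pi_rpow_race {ι : Type*} [Fintype ι] [DecidableEq ι] (c : ι → ℝ)
    (cpos : ∀ i, 0 < c i) (u : ι) :
    Measure.pi (fun _ : ι => volume.restrict (Ico (0 : ℝ) 1))
        {a | ∀ v, v ≠ u → 1 - (1 - a u) ^ (c v / c u) < a v} =
      ENNReal.ofReal (c u / ∑ v, c v) := by
  set K := ∑ v ∈ Finset.univ.erase u, c v / c u
  have hK : 0 ≤ K := Finset.sum_nonneg fun v _ => (div_pos (cpos v) (cpos u)).le
  have hK1 : 1 / (K + 1) = c u / ∑ v, c v := by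
    simp only [K]
    rw [← Finset.sum_div, ← Finset.add_sum_erase _ _ (Finset.mem_univ u),
      div_add_one (cpos u).ne', one_div_div, add_comm]
  have hslice : ∀ t ∈ Ico (0 : ℝ) 1,
      ∏ v ∈ Finset.univ.erase u,
          volume.restrict (Ico (0 : ℝ) 1) (Ioi (1 - (1 - t) ^ (c v / c u))) =
        ENNReal.ofReal ((1 - t) ^ K) := by
    rintro t ⟨ht0, ht1⟩
    have hpow : ∀ v, (1 - t) ^ (c v / c u) ≤ 1 := fun v =>
      Real.rpow_le_one (by linarith) (by linarith) (div_pos (cpos v) (cpos u)).le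
    simp_rw [fun v => volume_restrict_Ico_Ioi (sub_nonneg.2 (hpow v)), sub_sub_cancel]
    rw [← ENNReal.ofReal_prod_of_nonneg fun v _ => Real.rpow_nonneg (by linarith) _,
      ← Real.rpow_sum_of_pos (by linarith)]
  refine (measure_pi_setOf_forall_ne _ u
    (S := fun v => {p : ℝ × ℝ | 1 - (1 - p.1) ^ (c v / c u) < p.2})
    fun v => measurableSet_lt (by fun_prop) (by fun_prop)).trans ?_
  refine (setLIntegral_congr_fun measurableSet_Ico hslice).trans ?_
  rw [lintegral_Ico_one_sub_rpow (by linarith), hK1]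

theorem log_assignment_probability_general {V : Type*} [Fintype V]
    (c : V → ℝ) (cpos : ∀ v, 0 < c v) (u : V) :
    ((Measure.pi fun _ : V => volume.restrict (Set.Ico (0 : ℝ) 1)).prod
        (volume.restrict (Set.Ico (0 : ℝ) 1)))
      {p : (V → ℝ) × ℝ | ∀ v : V, v ≠ u →
        (1 / c u) * (-Real.log (1 - Int.fract (p.2 - p.1 u))) <
          (1 / c v) * (-Real.log (1 - Int.fract (p.2 - p.1 v)))} =
      ENNReal.ofReal (c u / ∑ v : V, c v) := by
  classical
  set race : Set (V → ℝ) := {a | ∀ v, v ≠ u → 1 - (1 - a u) ^ (c v / c u) < a v}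
  have hrace : MeasurableSet race := by measurability
  have hset : {p : (V → ℝ) × ℝ | ∀ v : V, v ≠ u →
      (1 / c u) * (-Real.log (1 - Int.fract (p.2 - p.1 u))) <
        (1 / c v) * (-Real.log (1 - Int.fract (p.2 - p.1 v)))} =
      (fun p : (V → ℝ) × ℝ => fun v => Int.fract (p.2 - p.1 v)) ⁻¹' race := by
    ext p
    exact forall₂_congr fun v _ => one_div_mul_neg_log_one_sub_lt_iff (cpos u) (cpos v)
      (Int.fract_lt_one _) (Int.fract_lt_one _)
  have hslice : ∀ x : ℝ, Measure.pi (fun _ : V => volume.restrict (Ico (0 : ℝ) 1))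
      ((fun h v => Int.fract (x - h v)) ⁻¹' race) = ENNReal.ofReal (c u / ∑ v, c v) := fun x =>
    ((measurePreserving_pi _ _ fun _ => measurePreserving_fract_const_sub x).measure_preimage
      hrace.nullMeasurableSet).trans (measure_pi_rpow_race c cpos u)
  rw [hset, Measure.prod_apply_symm (hrace.preimage (by fun_prop))]
  simp_rw [preimage_preimage, hslice]
  simp

/-- Logarithmic capacity functions
`C_u(x) = (1/c(u)) (-log(1 - ((x - h(u)) mod 1)))`: with node positions and the
data hash i.i.d. uniform on `[0,1)`, the probability that the data element is
assigned to `u` equals `c(u) / ∑_v c(v)`; hence the expected fraction of data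
stored at `u` is proportional to its capacity. -/
theorem log_assignment_probability {V : Type*} [Fintype V] [DecidableEq V]
    (c : V → ℝ) (cpos : ∀ v, 0 < c v) (cinj : Function.Injective c) (u : V) :
    ((Measure.pi fun _ : V => volume.restrict (Set.Ico (0 : ℝ) 1)).prod
        (volume.restrict (Set.Ico (0 : ℝ) 1)))
      {p : (V → ℝ) × ℝ | ∀ v : V, v ≠ u →
        (1 / c u) * (-Real.log (1 - Int.fract (p.2 - p.1 u))) <
          (1 / c v) * (-Real.log (1 - Int.fract (p.2 - p.1 v)))} =
      ENNReal.ofReal (c u / ∑ v : V, c v) :=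
  log_assignment_probability_general c cpos u
end

section
/- Let V be finite with distinct positions and distinct capacities. If |S⁺(u)| ≤ k for every node u (length of every larger-successor chain at most k), then |S⁻(u)| ≤ k + 1 for every u, where S⁻(u) = {v : pred⁺₁(v) = u}. -/
open Relation

section

variable {V : Type*} {h c : V → ℝ}

theorem exists_isSucc_le [Finite V] {x v : V} (hxv : h x < h v) (cxv : c x < c v) :
    ∃ y, IsSucc h c x y ∧ h y ≤ h v := by
  obtain ⟨y, ⟨hxy, cxy⟩, hmin⟩ :=
    Set.exists_min_image {w | h x < h w ∧ c x < c w} h (Set.toFinite _) ⟨v, hxv, cxv⟩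
  exact ⟨y, ⟨hxy, cxy, fun w hw cw => hmin w ⟨hw, cw⟩⟩, hmin v ⟨hxv, cxv⟩⟩

theorem transGen_isSucc_of_forall_lt [Finite V] {x v : V} (hxv : h x < h v) (cxv : c x < c v)
    (hbetween : ∀ y, h x < h y → h y < h v → c y < c v) :
    TransGen (IsSucc h c) x v := by
  obtain ⟨y, hy, hyv⟩ := exists_isSucc_le hxv cxv
  rcases hyv.eq_or_lt with hyv | hyv
  · exact .single ⟨hxv, cxv, fun w hw cw => hyv ▸ hy.2.2 w hw cw⟩
  · have hxy := hy.1
    have : {w | h y < h w}.ncard < {w | h x < h w}.ncard :=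
      Set.ncard_lt_ncard ⟨fun w hw => hxy.trans hw, fun hsub => lt_irrefl (h y) (hsub hxy)⟩
        (Set.toFinite _)
    exact .head hy <| transGen_isSucc_of_forall_lt hyv (hbetween y hxy hyv)
      fun z hyz hzv => hbetween z (hxy.trans hyz) hzv
termination_by {w | h x < h w}.ncard

theorem IsPred.lt_of_mem_Ioo (cinj : Function.Injective c) {u v y : V}
    (hv : IsPred h c v u) (hy : h y ∈ Set.Ioo (h u) (h v)) : c y < c v :=
  lt_of_le_of_ne (not_lt.1 fun hlt => (hv.2.2 y hy.2 hlt).not_gt hy.1)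
    fun hcy => hy.2.ne (congrArg h (cinj hcy))

theorem transGen_isSucc_of_isPred [Finite V] (cinj : Function.Injective c) {u v w : V}
    (hv : IsPred h c v u) (hw : IsPred h c w u) (hwv : h w < h v) :
    TransGen (IsSucc h c) w v :=
  transGen_isSucc_of_forall_lt hwv (hv.lt_of_mem_Ioo cinj ⟨hw.1, hwv⟩)
    fun _ hwy hyv => hv.lt_of_mem_Ioo cinj ⟨hw.1.trans hwy, hyv⟩

theorem setOf_isPred_diff_subset [Finite V] (hinj : Function.Injective h)
    (cinj : Function.Injective c) {u w : V} (hw : IsPred h c w u)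
    (hmin : ∀ v, IsPred h c v u → h w ≤ h v) :
    {v | IsPred h c v u} \ {w} ⊆ {t | TransGen (IsSucc h c) w t} := by
  rintro v ⟨hv, hvw⟩
  have hwv : h w < h v := (hmin v hv).lt_of_ne fun e => hvw (hinj e).symm
  exact transGen_isSucc_of_isPred cinj hv hw hwv

end

/-- If every larger-successor chain has length at most `k`
(`|S⁺(u)| ≤ k` for all `u`), then every fiber of `pred⁺₁` satisfies
`|S⁻(u)| ≤ k + 1`. -/
theorem sminus_card_le {V : Type*} [Fintype V]
    (h c : V → ℝ) (hinj : Function.Injective h) (cinj : Function.Injective c)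
    (k : ℕ)
    (hk : ∀ u : V, {t | Relation.TransGen (IsSucc h c) u t}.ncard ≤ k) :
    ∀ u : V, {v | IsPred h c v u}.ncard ≤ k + 1 := by
  intro u
  rcases {v | IsPred h c v u}.eq_empty_or_nonempty with hempty | hne
  · simp [hempty]
  obtain ⟨w, hw, hmin⟩ := Set.exists_min_image _ h (Set.toFinite _) hne
  have hsub := setOf_isPred_diff_subset hinj cinj hw hmin
  calc {v | IsPred h c v u}.ncard
      = ({v | IsPred h c v u} \ {w}).ncard + 1 := (Set.ncard_sdiff_singleton_add_one hw).symm
    _ ≤ {t | TransGen (IsSucc h c) w t}.ncard + 1 :=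
        Nat.add_le_add_right (Set.ncard_le_ncard hsub) 1
    _ ≤ k + 1 := Nat.add_le_add_right (hk w) 1
end

section
/- Let V be finite with distinct positions and capacities, and suppose |S⁺(u)| ≤ k and |P⁺(u)| ≤ k for all u ∈ V. Then the diameter of the CONE graph G^CONE is at most 2k, where edges are (u,v) with v ∈ S⁺(u) ∪ P⁺(u) ∪ S⁻(u) ∪ P⁻(u). -/
/-- The (undirected) CONE graph: `u ~ v` iff `v ∈ S⁺(u) ∪ P⁺(u) ∪ S⁻(u) ∪ P⁻(u)`. -/
def coneGraph {V : Type*} (h c : V → ℝ) : SimpleGraph V where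
  Adj u v := u ≠ v ∧ (Relation.TransGen (IsSucc h c) u v ∨
    Relation.TransGen (IsSucc h c) v u ∨
    Relation.TransGen (IsPred h c) u v ∨
    Relation.TransGen (IsPred h c) v u)
  symm := by
    constructor
    rintro a b ⟨hne, hr⟩
    exact ⟨hne.symm, by tauto⟩
  loopless := by
    constructor
    rintro a ⟨hne, -⟩
    exact hne rfl

open Relation

theorem Relation.transGen_of_exists_step {α β : Type*} [Finite α] [Preorder β]
    {R : α → α → Prop} {P : α → Prop} {m : α} (f : α → β)
    (hstep : ∀ u, P u → ∃ v, R u v ∧ f u < f v ∧ (v = m ∨ P v)) :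
    ∀ u, P u → TransGen R u m := by
  have : IsTrans α (fun a b => f b < f a) := ⟨fun _ _ _ hab hbc => hbc.trans hab⟩
  have : Std.Irrefl (fun a b : α => f b < f a) := ⟨fun _ => lt_irrefl _⟩
  intro u
  induction u using (Finite.wellFounded_of_trans_of_irrefl (fun a b : α => f b < f a)).induction
    with
  | _ u ih =>
    intro hu
    obtain ⟨v, huv, hfuv, rfl | hv⟩ := hstep u hu
    · exact .single huv
    · exact .head huv (ih v hfuv hv)

section Cone

variable {V : Type*} [Finite V] {h c : V → ℝ}

theorem exists_isSucc_s13 {u w : V} (hh : h u < h w) (hc : c u < c w) : ∃ v, IsSucc h c u v := by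
  obtain ⟨v, ⟨hhv, hcv⟩, hmin⟩ :=
    Set.exists_min_image {x | h u < h x ∧ c u < c x} h (Set.toFinite _) ⟨w, hh, hc⟩
  exact ⟨v, hhv, hcv, fun x hhx hcx => hmin x ⟨hhx, hcx⟩⟩

theorem exists_isPred {u w : V} (hh : h w < h u) (hc : c u < c w) : ∃ v, IsPred h c u v := by
  obtain ⟨v, ⟨hhv, hcv⟩, hmax⟩ :=
    Set.exists_max_image {x | h x < h u ∧ c u < c x} h (Set.toFinite _) ⟨w, hh, hc⟩
  exact ⟨v, hhv, hcv, fun x hhx hcx => hmax x ⟨hhx, hcx⟩⟩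

variable (hinj : Function.Injective h) (cinj : Function.Injective c)
  {m : V} (hm : ∀ w, c w ≤ c m)
include hinj cinj hm

theorem transGen_isSucc_of_lt_of_isMax {u : V} (hu : h u < h m) :
    TransGen (IsSucc h c) u m := by
  refine transGen_of_exists_step c (P := fun u => h u < h m) (fun u hu => ?_) u hu
  have hcu : c u < c m := (hm u).lt_of_ne (cinj.ne (ne_of_apply_ne h hu.ne))
  obtain ⟨v, hv⟩ := exists_isSucc_s13 hu hcu
  exact ⟨v, hv, hv.2.1, (hv.2.2 m hu hcu).eq_or_lt.imp (fun e => hinj e) id⟩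

theorem transGen_isPred_of_lt_of_isMax {u : V} (hu : h m < h u) :
    TransGen (IsPred h c) u m := by
  refine transGen_of_exists_step c (P := fun u => h m < h u) (fun u hu => ?_) u hu
  have hcu : c u < c m := (hm u).lt_of_ne (cinj.ne (ne_of_apply_ne h hu.ne'))
  obtain ⟨v, hv⟩ := exists_isPred hu hcu
  exact ⟨v, hv, hv.2.1, (hv.2.2 m hu hcu).eq_or_lt.imp (fun e => (hinj e).symm) id⟩

theorem coneGraph_adj_of_isMax {u : V} (hu : u ≠ m) : (coneGraph h c).Adj u m := by
  refine ⟨hu, ?_⟩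
  rcases (hinj.ne hu).lt_or_gt with hlt | hgt
  · exact .inl (transGen_isSucc_of_lt_of_isMax hinj cinj hm hlt)
  · exact .inr (.inr (.inl (transGen_isPred_of_lt_of_isMax hinj cinj hm hgt)))

theorem coneGraph_exists_walk_to_isMax (u : V) :
    ∃ p : (coneGraph h c).Walk u m, p.length ≤ 1 := by
  rcases eq_or_ne u m with rfl | hu
  · exact ⟨.nil, zero_le_one⟩
  · exact ⟨(coneGraph_adj_of_isMax hinj cinj hm hu).toWalk, le_rfl⟩

omit hm

theorem coneGraph_exists_walk_length_le_two (u v : V) :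
    ∃ p : (coneGraph h c).Walk u v, p.length ≤ 2 := by
  have : Nonempty V := ⟨u⟩
  obtain ⟨m, hm⟩ := Finite.exists_max c
  obtain ⟨p, hp⟩ := coneGraph_exists_walk_to_isMax hinj cinj hm u
  obtain ⟨q, hq⟩ := coneGraph_exists_walk_to_isMax hinj cinj hm v
  exact ⟨p.append q.reverse, by simp only [SimpleGraph.Walk.length_append,
    SimpleGraph.Walk.length_reverse]; omega⟩

theorem one_le_of_ncard_transGen_le {k : ℕ}
    (hS : ∀ u : V, {t | TransGen (IsSucc h c) u t}.ncard ≤ k)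
    (hP : ∀ u : V, {t | TransGen (IsPred h c) u t}.ncard ≤ k) {u v : V} (huv : u ≠ v) :
    1 ≤ k := by
  have : Nonempty V := ⟨u⟩
  obtain ⟨m, hm⟩ := Finite.exists_max c
  obtain ⟨x, hx⟩ : ∃ x, x ≠ m :=
    (eq_or_ne u m).elim (fun hu => ⟨v, hu ▸ huv.symm⟩) (fun hu => ⟨u, hu⟩)
  rcases (hinj.ne hx).lt_or_gt with hlt | hgt
  · exact ((Set.ncard_pos (Set.toFinite _)).mpr
      ⟨m, transGen_isSucc_of_lt_of_isMax hinj cinj hm hlt⟩).trans_le (hS x)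
  · exact ((Set.ncard_pos (Set.toFinite _)).mpr
      ⟨m, transGen_isPred_of_lt_of_isMax hinj cinj hm hgt⟩).trans_le (hP x)

end Cone

/-- If `|S⁺(u)| ≤ k` and `|P⁺(u)| ≤ k` for all nodes `u`, then the CONE graph
is connected with diameter at most `2k`. -/
theorem cone_diameter {V : Type*} [Fintype V]
    (h c : V → ℝ) (hinj : Function.Injective h) (cinj : Function.Injective c)
    (k : ℕ)
    (hS : ∀ u : V, {t | Relation.TransGen (IsSucc h c) u t}.ncard ≤ k)
    (hP : ∀ u : V, {t | Relation.TransGen (IsPred h c) u t}.ncard ≤ k) :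
    ∀ u v : V, (coneGraph h c).Reachable u v ∧ (coneGraph h c).dist u v ≤ 2 * k := by
  intro u v
  obtain ⟨p, hp⟩ := coneGraph_exists_walk_length_le_two hinj cinj u v
  refine ⟨p.reachable, ?_⟩
  rcases eq_or_ne u v with rfl | huv
  · simp
  · have hk := one_le_of_ncard_transGen_le hinj cinj hS hP huv
    calc (coneGraph h c).dist u v ≤ p.length := SimpleGraph.dist_le p
      _ ≤ 2 * k := by omega
end

section
/- Consider a linearization process on a finite set V with injective h : V → ℝ, where in each step an edge (u,w) with h(u) < h(w) and some node v with h(u) < h(v) < h(w) adjacent to u is replaced according to delegation (u keeps the closer of v,w and an edge from the closer to the farther is added). Define the range of an undirected path p as max_{v∈p} h(v) − min_{v∈p} h(v). Then for consecutive nodes x, y in the sorted order (no node has h-value strictly between them), any connecting path of positive range can eventually be replaced by a connecting path of strictly smaller range; consequently the process terminates with the edge (x,y) present, i.e., the sorted list is formed. -/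
/-- Undirected adjacency induced by a directed edge set. -/
def adjE {V : Type*} (E : Set (V × V)) (a b : V) : Prop := (a, b) ∈ E ∨ (b, a) ∈ E

/-- `l` is an undirected path from `x` to `y` in the edge set `E`. -/
def IsPath {V : Type*} (E : Set (V × V)) (x y : V) (l : List V) : Prop :=
  l.head? = some x ∧ l.getLast? = some y ∧ l.Chain' (adjE E)

/-- The range of a path: the difference between the largest and the smallest
position of a node on it. -/
noncomputable def pathRange {V : Type*} (h : V → ℝ) (l : List V) : ℝ :=
  sSup (h '' {v | v ∈ l}) - sInf (h '' {v | v ∈ l})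

/-- One delegation step of the linearization process: a node `u` knowing both
`v` and `w` with `h(v)` strictly between `h(u)` and `h(w)` delegates `w` to
`v`: the edge `(u,w)` is replaced by the edge `(v,w)`. -/
def Step {V : Type*} (h : V → ℝ) (E E' : Set (V × V)) : Prop :=
  (∃ u v w : V, adjE E u v ∧ adjE E u w ∧ h u < h v ∧ h v < h w ∧
    E' = insert (v, w) (E \ {(u, w), (w, u)})) ∨
  (∃ u v w : V, adjE E u v ∧ adjE E u w ∧ h w < h v ∧ h v < h u ∧
    E' = insert (v, w) (E \ {(u, w), (w, u)}))

/-!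
Pass to a path without repeated nodes. If its range exceeds `h y - h x`, its highest or its
lowest node `u` lies strictly inside it, and both path neighbours `a`, `b` of `u` lie on the same
side of `u`. Then `u` delegates the farther of `a`, `b` to the nearer one: this creates the edge
`a`–`b` and removes only an edge at `u`, so the path with `u` cut out survives, and since `h` is
injective `u` was the unique extremal node, so the range strictly drops. Every such step shortens
the path, so eventually the range is `h y - h x`; as no node lies strictly between `x` and `y`,
the path then starts with the edge `x`–`y`.
-/

section

variable {V : Type*}

section pathRange

variable (h : V → ℝ) {l l' : List V}

theorem finite_image_setOf_mem : (h '' {v | v ∈ l}).Finite := l.finite_toSet.image h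

theorem sub_le_pathRange {z z' : V} (hz : z ∈ l) (hz' : z' ∈ l) :
    h z - h z' ≤ pathRange h l :=
  sub_le_sub (le_csSup (finite_image_setOf_mem h).bddAbove ⟨z, hz, rfl⟩)
    (csInf_le (finite_image_setOf_mem h).bddBelow ⟨z', hz', rfl⟩)

theorem pathRange_le_of_forall_le (hne : l ≠ []) {a b : ℝ} (ha : ∀ z ∈ l, a ≤ h z)
    (hb : ∀ z ∈ l, h z ≤ b) : pathRange h l ≤ b - a := by
  have hS : (h '' {v | v ∈ l}).Nonempty := ⟨_, _, List.head_mem hne, rfl⟩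
  exact sub_le_sub (csSup_le hS (Set.forall_mem_image.2 hb))
    (le_csInf hS (Set.forall_mem_image.2 ha))

theorem sInf_image_le_of_subset (hne : l' ≠ []) (hsub : l' ⊆ l) :
    sInf (h '' {v | v ∈ l}) ≤ sInf (h '' {v | v ∈ l'}) :=
  csInf_le_csInf (finite_image_setOf_mem h).bddBelow ⟨_, _, List.head_mem hne, rfl⟩
    (Set.image_mono fun _ hz => hsub hz)

theorem pathRange_le_of_subset (hne : l' ≠ []) (hsub : l' ⊆ l) :
    pathRange h l' ≤ pathRange h l :=
  sub_le_sub (csSup_le_csSup (finite_image_setOf_mem h).bddAbove ⟨_, _, List.head_mem hne, rfl⟩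
    (Set.image_mono fun _ hz => hsub hz)) (sInf_image_le_of_subset h hne hsub)

theorem pathRange_lt_of_subset (hne : l' ≠ []) (hsub : l' ⊆ l) {u : V} (hu : u ∈ l)
    (hlt : ∀ z ∈ l', h z < h u) : pathRange h l' < pathRange h l := by
  have hsup : sSup (h '' {v | v ∈ l'}) < h u :=
    ((finite_image_setOf_mem h).csSup_lt_iff ⟨_, _, List.head_mem hne, rfl⟩).2
      (Set.forall_mem_image.2 hlt)
  have hu_le : h u ≤ sSup (h '' {v | v ∈ l}) :=
    le_csSup (finite_image_setOf_mem h).bddAbove ⟨u, hu, rfl⟩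
  unfold pathRange
  linarith [sInf_image_le_of_subset h hne hsub]

theorem pathRange_neg (l : List V) : pathRange (-h) l = pathRange h l := by
  have himage : (-h) '' {v | v ∈ l} = -(h '' {v | v ∈ l}) := by
    rw [← Set.image_neg_eq_neg, Set.image_image]; rfl
  rw [pathRange, pathRange, himage, Real.sSup_neg, Real.sInf_neg]
  ring

end pathRange

section Step

variable {h : V → ℝ} {E E' : Set (V × V)}

theorem adjE.symm {a b : V} (hab : adjE E a b) : adjE E b a := Or.symm hab

theorem step_neg_iff : Step (-h) E E' ↔ Step h E E' := by
  simp only [Step, Pi.neg_apply, neg_lt_neg_iff]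
  constructor <;> rintro (⟨u, v, w, h1, h2, h3, h4, h5⟩ | ⟨u, v, w, h1, h2, h3, h4, h5⟩)
  all_goals first
    | exact Or.inl ⟨u, v, w, h1, h2, h4, h3, h5⟩
    | exact Or.inr ⟨u, v, w, h1, h2, h4, h3, h5⟩

theorem adjE_insert_sdiff_of_ne (e : V × V) {u w p q : V} (hp : p ≠ u) (hq : q ≠ u)
    (hpq : adjE E p q) : adjE (insert e (E \ {(u, w), (w, u)})) p q := by
  unfold adjE at hpq ⊢
  rcases hpq with hpq | hpq
  · exact Or.inl (Or.inr ⟨hpq, by simp [hp, hq]⟩)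
  · exact Or.inr (Or.inr ⟨hpq, by simp [hp, hq]⟩)

theorem exists_step_bypass {u a b : V} (hau : adjE E a u) (hub : adjE E u b)
    (ha : h a < h u) (hb : h b < h u) (hab : h a ≠ h b) :
    ∃ E', Step h E E' ∧ adjE E' a b ∧
      ∀ p q, p ≠ u → q ≠ u → adjE E p q → adjE E' p q := by
  wlog hlt : h a < h b generalizing a b
  · obtain ⟨E', hstep, hba, hE⟩ :=
      this hub.symm hau.symm hb ha hab.symm ((not_lt.1 hlt).lt_of_ne hab.symm)
    exact ⟨E', hstep, hba.symm, hE⟩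
  refine ⟨_, Or.inr ⟨u, b, a, hub, hau.symm, hlt, hb, rfl⟩, Or.inr (Set.mem_insert _ _),
    fun p q hp hq hpq => adjE_insert_sdiff_of_ne _ hp hq hpq⟩

end Step

theorem List.exists_eq_append_cons_cons_and_erase_eq [DecidableEq V] {l : List V} {u : V}
    (hu : u ∈ l) (hhead : l.head? ≠ some u) (hlast : l.getLast? ≠ some u) :
    ∃ s a b t, l = s ++ a :: u :: b :: t ∧ l.erase u = s ++ a :: b :: t := by
  obtain ⟨s', t', -, rfl, herase⟩ := List.exists_erase_eq hu
  rcases List.eq_nil_or_concat s' with rfl | ⟨s, a, rfl⟩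
  · simp at hhead
  cases t' with
  | nil => simp at hlast
  | cons b t => exact ⟨s, a, b, t, by simp, by simpa using herase⟩

theorem List.exists_eq_append_cons_append_cons_of_not_nodup {l : List V} (hl : ¬ l.Nodup) :
    ∃ s m t v, l = s ++ v :: (m ++ v :: t) := by
  obtain ⟨v, hv⟩ := List.exists_duplicate_iff_not_nodup.2 hl
  obtain ⟨r₁, r₂, rfl, hv₁, hv₂⟩ :=
    List.cons_sublist_iff.1 (List.duplicate_iff_sublist.1 hv)
  obtain ⟨s, m, rfl⟩ := List.append_of_mem hv₁
  obtain ⟨m', t, rfl⟩ := List.append_of_mem (List.singleton_sublist.1 hv₂)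
  exact ⟨s, m ++ m', t, v, by simp⟩

namespace IsPath

variable {E E' : Set (V × V)} {x y : V} {l : List V}

theorem iff_isChain : IsPath E x y l ↔
    l.head? = some x ∧ l.getLast? = some y ∧ l.IsChain (adjE E) := Iff.rfl

theorem ne_nil (hp : IsPath E x y l) : l ≠ [] := by
  rintro rfl
  simp [IsPath] at hp

theorem left_mem (hp : IsPath E x y l) : x ∈ l := List.mem_of_mem_head? hp.1

theorem right_mem (hp : IsPath E x y l) : y ∈ l := List.mem_of_mem_getLast? hp.2.1

theorem splice {s m t : List V} {v : V} (hp : IsPath E x y (s ++ v :: (m ++ v :: t))) :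
    IsPath E x y (s ++ v :: t) := by
  obtain ⟨hhead, hlast, hchain⟩ := iff_isChain.1 hp
  rw [List.isChain_split, List.isChain_cons_split] at hchain
  refine iff_isChain.2 ⟨by cases s <;> simpa using hhead, ?_, ?_⟩
  · rw [List.getLast?_append_cons, ← List.cons_append, List.getLast?_append_cons] at hlast
    rwa [List.getLast?_append_cons]
  exact List.isChain_split.2 ⟨hchain.1, hchain.2.2⟩

theorem bypass {s t : List V} {a u b : V} (hp : IsPath E x y (s ++ a :: u :: b :: t))
    (hu : u ∉ s ++ a :: b :: t) (hab : adjE E' a b)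
    (hE : ∀ p q, p ≠ u → q ≠ u → adjE E p q → adjE E' p q) :
    IsPath E' x y (s ++ a :: b :: t) := by
  obtain ⟨hhead, hlast, hchain⟩ := iff_isChain.1 hp
  have hE' : ∀ r : List V, (∀ z ∈ r, z ≠ u) → r.IsChain (adjE E) →
      r.IsChain (adjE E') :=
    fun r hr hc => hc.imp_of_mem_imp fun p q hp hq => hE p q (hr p hp) (hr q hq)
  rw [List.isChain_append_cons_cons] at hchain
  refine iff_isChain.2 ⟨by cases s <;> simpa using hhead, by simpa using hlast,
    List.isChain_append_cons_cons.2 ⟨hE' _ ?_ hchain.1, hab, hE' _ ?_ hchain.2.2.tail⟩⟩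
  all_goals rintro z hz rfl; simp_all

end IsPath

theorem IsPath.exists_nodup_subset {E : Set (V × V)} {x y : V} {l : List V}
    (hp : IsPath E x y l) :
    ∃ l', IsPath E x y l' ∧ l'.Nodup ∧ l' ⊆ l := by
  by_cases hnd : l.Nodup
  · exact ⟨l, hp, hnd, List.Subset.refl l⟩
  obtain ⟨s, m, t, v, hl⟩ := List.exists_eq_append_cons_append_cons_of_not_nodup hnd
  rw [hl] at hp
  obtain ⟨l', hp', hnd', hsub⟩ := IsPath.exists_nodup_subset hp.splice
  refine ⟨l', hp', hnd', fun z hz => ?_⟩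
  have hz' := hsub hz
  simp only [hl, List.mem_append, List.mem_cons] at hz' ⊢
  tauto
termination_by l.length
decreasing_by simp [hl]

theorem IsPath.adjE_of_pathRange_le {h : V → ℝ} {E : Set (V × V)} {x y : V} {l : List V}
    (hinj : Function.Injective h) (hxy : h x < h y)
    (hconsec : ∀ z : V, ¬(h x < h z ∧ h z < h y)) (hp : IsPath E x y l) (hnd : l.Nodup)
    (hr : pathRange h l ≤ h y - h x) : adjE E x y := by
  obtain ⟨hhead, hlast, hchain⟩ := IsPath.iff_isChain.1 hp
  obtain ⟨r, rfl⟩ := List.head?_eq_some_iff.1 hhead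
  cases r with
  | nil => exact absurd (congrArg h (by simpa using hlast : x = y)) hxy.ne
  | cons c r =>
    have hcx : c ≠ x := by rintro rfl; simp at hnd
    have hxc := sub_le_pathRange h (l := x :: c :: r) (z := c) (z' := x) (by simp) (by simp)
    have hcy := sub_le_pathRange h (z' := c) hp.right_mem (by simp)
    have hc : c = y := by
      by_contra hc
      exact hconsec c ⟨(by linarith : h x ≤ h c).lt_of_ne (hinj.ne hcx.symm),
        (by linarith : h c ≤ h y).lt_of_ne (hinj.ne hc)⟩
    exact hc ▸ (List.isChain_cons_cons.1 hchain).1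

section Delegation

variable [DecidableEq V] {h : V → ℝ} {E : Set (V × V)} {x y : V} {l : List V}

theorem exists_step_isPath_erase_of_max (hinj : Function.Injective h) (hp : IsPath E x y l)
    (hnd : l.Nodup) {u : V} (hu : u ∈ l) (hux : u ≠ x) (huy : u ≠ y)
    (hmax : ∀ z ∈ l, h z ≤ h u) :
    ∃ E', Step h E E' ∧ IsPath E' x y (l.erase u) ∧
      pathRange h (l.erase u) < pathRange h l := by
  have hlt : ∀ z ∈ l.erase u, h z < h u := fun z hz =>
    (hmax z (List.mem_of_mem_erase hz)).lt_of_ne (hinj.ne (hnd.mem_erase_iff.1 hz).1)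
  have hne : l.erase u ≠ [] :=
    List.ne_nil_of_mem (hnd.mem_erase_iff.2 ⟨hux.symm, hp.left_mem⟩)
  suffices ∃ E', Step h E E' ∧ IsPath E' x y (l.erase u) from
    this.imp fun E' ⟨hstep, hp'⟩ =>
      ⟨hstep, hp', pathRange_lt_of_subset h hne List.erase_subset hu hlt⟩
  have hnd' := hnd.erase u
  obtain ⟨s, a, b, t, rfl, herase⟩ := List.exists_eq_append_cons_cons_and_erase_eq hu
    (by rw [hp.1]; simpa using hux.symm) (by rw [hp.2.1]; simpa using huy.symm)
  rw [herase] at hlt hnd' ⊢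
  have hchain := (IsPath.iff_isChain.1 hp).2.2
  simp only [List.isChain_append_cons_cons, List.isChain_cons_cons] at hchain
  have hne_ab : a ≠ b := by rintro rfl; simp [List.nodup_append] at hnd'
  obtain ⟨E', hstep, hab, hE⟩ := exists_step_bypass hchain.2.1 hchain.2.2.1
    (hlt a (by simp)) (hlt b (by simp)) (hinj.ne hne_ab)
  exact ⟨E', hstep, hp.bypass (fun hu' => lt_irrefl _ (hlt u hu')) hab hE⟩

theorem exists_step_isPath_erase_of_min (hinj : Function.Injective h) (hp : IsPath E x y l)
    (hnd : l.Nodup) {u : V} (hu : u ∈ l) (hux : u ≠ x) (huy : u ≠ y)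
    (hmin : ∀ z ∈ l, h u ≤ h z) :
    ∃ E', Step h E E' ∧ IsPath E' x y (l.erase u) ∧
      pathRange h (l.erase u) < pathRange h l := by
  simpa only [step_neg_iff, pathRange_neg] using
    exists_step_isPath_erase_of_max (h := -h) (neg_injective.comp hinj) hp hnd hu hux huy
      (by simpa using hmin)

theorem exists_step_pathRange_lt (hinj : Function.Injective h) (hxy : h x < h y)
    (hp : IsPath E x y l) (hnd : l.Nodup) (hr : h y - h x < pathRange h l) :
    ∃ u ∈ l, ∃ E', Step h E E' ∧ IsPath E' x y (l.erase u) ∧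
      pathRange h (l.erase u) < pathRange h l := by
  obtain ⟨u, hu, hmax⟩ := Set.exists_max_image _ h l.finite_toSet ⟨x, hp.left_mem⟩
  obtain ⟨w, hw, hmin⟩ := Set.exists_min_image _ h l.finite_toSet ⟨x, hp.left_mem⟩
  have hrange := pathRange_le_of_forall_le h hp.ne_nil hmin hmax
  by_cases hyu : h y < h u
  · exact ⟨u, hu, exists_step_isPath_erase_of_max hinj hp hnd hu (by rintro rfl; linarith)
      (by rintro rfl; linarith) hmax⟩
  · exact ⟨w, hw, exists_step_isPath_erase_of_min hinj hp hnd hw (by rintro rfl; linarith)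
      (by rintro rfl; linarith) hmin⟩

end Delegation

theorem exists_reflTransGen_step_adjE [DecidableEq V] {h : V → ℝ} {E : Set (V × V)}
    {x y : V} {l : List V} (hinj : Function.Injective h) (hxy : h x < h y)
    (hconsec : ∀ z : V, ¬(h x < h z ∧ h z < h y)) (hp : IsPath E x y l) (hnd : l.Nodup) :
    ∃ E', Relation.ReflTransGen (Step h) E E' ∧ adjE E' x y := by
  by_cases hr : h y - h x < pathRange h l
  · obtain ⟨u, hu, E', hstep, hp', -⟩ := exists_step_pathRange_lt hinj hxy hp hnd hr
    obtain ⟨E'', hE'', hadj⟩ := exists_reflTransGen_step_adjE hinj hxy hconsec hp' (hnd.erase u)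
    exact ⟨E'', .head hstep hE'', hadj⟩
  · exact ⟨E, .refl, hp.adjE_of_pathRange_le hinj hxy hconsec hnd (not_lt.1 hr)⟩
termination_by l.length
decreasing_by simpa [List.length_erase_of_mem hu] using List.length_pos_of_mem hu

end

theorem linearization_range_decreases_general {V : Type*}
    (h : V → ℝ) (hinj : Function.Injective h)
    (x y : V) (hxy : h x < h y)
    (hconsec : ∀ z : V, ¬(h x < h z ∧ h z < h y))
    (E : Set (V × V)) (l : List V) (hl : IsPath E x y l) :
    (h y - h x < pathRange h l →
      ∃ (E' : Set (V × V)) (l' : List V),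
        Relation.ReflTransGen (Step h) E E' ∧ IsPath E' x y l' ∧
          pathRange h l' < pathRange h l) ∧
    (∃ E'' : Set (V × V),
      Relation.ReflTransGen (Step h) E E'' ∧ ((x, y) ∈ E'' ∨ (y, x) ∈ E'')) := by
  classical
  obtain ⟨l₀, hp₀, hnd₀, hsub₀⟩ := hl.exists_nodup_subset
  refine ⟨fun hr => ?_, exists_reflTransGen_step_adjE hinj hxy hconsec hp₀ hnd₀⟩
  have hle : pathRange h l₀ ≤ pathRange h l := pathRange_le_of_subset h hp₀.ne_nil hsub₀
  by_cases hr₀ : h y - h x < pathRange h l₀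
  · obtain ⟨u, -, E', hstep, hp', hlt⟩ := exists_step_pathRange_lt hinj hxy hp₀ hnd₀ hr₀
    exact ⟨E', _, .single hstep, hp', hlt.trans_le hle⟩
  · exact ⟨E, l₀, .refl, hp₀, (not_lt.1 hr₀).trans_lt hr⟩

/-- Linearization: let `x, y` be consecutive in the sorted order and connected
by an undirected path `l` in `E`.  If `l` has range larger than `h y - h x`,
then after finitely many delegation steps there is a connecting path of
strictly smaller range; consequently, after finitely many delegation steps the
edge between `x` and `y` is present, i.e. the sorted list is formed. -/
theorem linearization_range_decreases {V : Type*} [Fintype V]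
    (h : V → ℝ) (hinj : Function.Injective h)
    (x y : V) (hxy : h x < h y)
    (hconsec : ∀ z : V, ¬(h x < h z ∧ h z < h y))
    (E : Set (V × V)) (l : List V) (hl : IsPath E x y l) :
    (h y - h x < pathRange h l →
      ∃ (E' : Set (V × V)) (l' : List V),
        Relation.ReflTransGen (Step h) E E' ∧ IsPath E' x y l' ∧
          pathRange h l' < pathRange h l) ∧
    (∃ E'' : Set (V × V),
      Relation.ReflTransGen (Step h) E E'' ∧ ((x, y) ∈ E'' ∨ (y, x) ∈ E'')) :=
  linearization_range_decreases_general h hinj x y hxy hconsec E l hl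
end

section
/- Let V be finite with distinct positions and capacities and suppose the sorted list is established (each node knows its direct left and right neighbor). If every node strictly to the right of u knows its correct first larger right successor succ⁺₁, then u eventually learns every node in S⁻(u): formally, by induction on position, for every x ∈ S⁻(u), there is a finite chain u = y₀, y₁, ..., y_k = x where y₁ is u's direct right neighbor and yᵢ₊₁ = succ⁺₁(yᵢ), and each yᵢ ∈ S⁻(u) ∪ {x}. -/
private lemma chain_aux {V : Type*} [Fintype V]
    (h c : V → ℝ) (hinj : Function.Injective h) (cinj : Function.Injective c)
    (u x : V) (hx : IsPred h c x u) :
    ∀ n (z : V), (Finset.univ.filter (fun w => h z < h w)).card = n →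
      IsPred h c z u → h z ≤ h x →
      ∃ (k : ℕ) (y : ℕ → V), y 0 = z ∧ y k = x ∧
        (∀ i < k, IsSucc h c (y i) (y (i + 1))) ∧
        (∀ i ≤ k, IsPred h c (y i) u) := by
  intro n
  induction n using Nat.strong_induction_on with
  | _ n ih =>
    intro z hcard hz hzx
    rcases eq_or_lt_of_le hzx with heq | hlt
    · have hzx' : z = x := hinj heq
      exact ⟨0, fun _ => z, rfl, by simp [hzx'], by simp, fun i hi => by
        interval_cases i; exact hz⟩
    · -- c z < c x
      have hczx : c z < c x := by
        by_contra hcon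
        have hne : z ≠ x := fun hzx2 => absurd (congrArg h hzx2) (ne_of_lt hlt)
        have : c x < c z := lt_of_le_of_ne (not_lt.mp hcon) (fun e => hne (cinj e.symm))
        exact absurd (hx.2.2 z hlt this) (not_le.mpr hz.1)
      set T := Finset.univ.filter (fun w => h z < h w ∧ c z < c w) with hT
      have hxT : x ∈ T := by simp [hT, hlt, hczx]
      obtain ⟨s, hsT, hsmin⟩ := T.exists_min_image h ⟨x, hxT⟩
      simp only [hT, Finset.mem_filter, Finset.mem_univ, true_and] at hsT
      have hsmin' : ∀ w, h z < h w → c z < c w → h s ≤ h w := fun w hw cw =>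
        hsmin w (by simp [hT, hw, cw])
      have hsucc : IsSucc h c z s := ⟨hsT.1, hsT.2, hsmin'⟩
      have hsx : h s ≤ h x := hsmin x hxT
      -- IsPred s u
      have hcs : c s < c u := by
        rcases eq_or_lt_of_le hsx with he | hl
        · rw [hinj he]; exact hx.2.1
        · have hne : s ≠ x := fun e => absurd (congrArg h e) (ne_of_lt hl)
          have hcsx : c s < c x := by
            by_contra hcon
            have : c x < c s := lt_of_le_of_ne (not_lt.mp hcon) (fun e => hne (cinj e.symm))
            exact absurd (hx.2.2 s hl this) (not_le.mpr (hz.1.trans hsT.1))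
          exact hcsx.trans hx.2.1
      have hpred : IsPred h c s u := by
        refine ⟨hz.1.trans hsT.1, hcs, fun w hws hcsw => ?_⟩
        by_contra hcon
        have huw : h u < h w := not_le.mp hcon
        rcases lt_or_ge (h z) (h w) with hzw | hwz
        · exact absurd (hsmin' w hzw (hsT.2.trans hcsw)) (not_le.mpr hws)
        · have hne : w ≠ z := fun e => absurd (congrArg c e)
            (ne_of_gt (hsT.2.trans hcsw))
          have hwz' : h w < h z := lt_of_le_of_ne hwz (fun e => hne (hinj e))
          exact absurd (hz.2.2 w hwz' (hsT.2.trans hcsw)) (not_le.mpr huw)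
      -- measure decreases
      have hsub : (Finset.univ.filter (fun w => h s < h w)) ⊂
          (Finset.univ.filter (fun w => h z < h w)) := by
        constructor
        · intro w hw
          simp only [Finset.mem_filter, Finset.mem_univ, true_and] at *
          exact hsT.1.trans hw
        · intro hcont
          have hs1 : s ∈ Finset.univ.filter (fun w => h z < h w) := by
            simp [hsT.1]
          have := hcont hs1
          simp at this
      have hlt' : (Finset.univ.filter (fun w => h s < h w)).card < n :=
        hcard ▸ Finset.card_lt_card hsub
      obtain ⟨k, y, hy0, hyk, hychain, hypred⟩ :=
        ih _ hlt' s rfl hpred hsx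
      refine ⟨k + 1, fun n => if n = 0 then z else y (n - 1), by simp, by simp [hyk],
        fun i hik => ?_, fun i hik => ?_⟩
      · rcases Nat.eq_zero_or_pos i with rfl | hi
        · simpa [hy0] using hsucc
        · have h1 : i ≠ 0 := hi.ne'
          have h2 : i + 1 ≠ 0 := by omega
          simp only [h1, h2, if_false]
          have e2 : i + 1 - 1 = i - 1 + 1 := by omega
          rw [e2]
          exact hychain (i - 1) (by omega)
      · rcases Nat.eq_zero_or_pos i with rfl | hi
        · simpa using hz
        · have h1 : i ≠ 0 := hi.ne'
          simp only [h1, if_false]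
          exact hypred (i - 1) (by omega)

/-- Structural core of the learning lemma: for every `x ∈ S⁻(u)` there is a
finite chain `u = y₀, y₁, …, y_k = x` in which `y₁` is `u`'s direct right
neighbor, `yᵢ₊₁ = succ⁺₁(yᵢ)`, and every `yᵢ` (for `i ≥ 1`) lies in `S⁻(u)`. -/
theorem sminus_learned_by_chain {V : Type*} [Fintype V]
    (h c : V → ℝ) (hinj : Function.Injective h) (cinj : Function.Injective c)
    (u x : V) (hx : IsPred h c x u) :
    ∃ (k : ℕ) (y : ℕ → V), 1 ≤ k ∧ y 0 = u ∧ y k = x ∧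
      (h u < h (y 1) ∧ ∀ w : V, h u < h w → h (y 1) ≤ h w) ∧
      (∀ i, 1 ≤ i → i < k → IsSucc h c (y i) (y (i + 1))) ∧
      (∀ i, 1 ≤ i → i ≤ k → IsPred h c (y i) u) := by
  set T := Finset.univ.filter (fun w => h u < h w) with hT
  have hxT : x ∈ T := by simp [hT, hx.1]
  obtain ⟨r, hrT, hrmin⟩ := T.exists_min_image h ⟨x, hxT⟩
  simp only [hT, Finset.mem_filter, Finset.mem_univ, true_and] at hrT
  have hrmin' : ∀ w, h u < h w → h r ≤ h w := fun w hw => hrmin w (by simp [hT, hw])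
  have hrx : h r ≤ h x := hrmin x hxT
  have hcr : c r < c u := by
    rcases eq_or_lt_of_le hrx with he | hl
    · rw [hinj he]; exact hx.2.1
    · have hne : r ≠ x := fun e => absurd (congrArg h e) (ne_of_lt hl)
      have hcrx : c r < c x := by
        by_contra hcon
        have : c x < c r := lt_of_le_of_ne (not_lt.mp hcon) (fun e => hne (cinj e.symm))
        exact absurd (hx.2.2 r hl this) (not_le.mpr hrT)
      exact hcrx.trans hx.2.1
  have hpred : IsPred h c r u := by
    refine ⟨hrT, hcr, fun w hwr _ => ?_⟩
    by_contra hcon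
    exact absurd (hrmin' w (not_le.mp hcon)) (not_le.mpr hwr)
  obtain ⟨k, y, hy0, hyk, hychain, hypred⟩ :=
    chain_aux h c hinj cinj u x hx _ r rfl hpred hrx
  refine ⟨k + 1, fun n => if n = 0 then u else y (n - 1), by omega, by simp,
    by simp [hyk], by simpa [hy0] using ⟨hrT, hrmin'⟩, fun i hi hik => ?_,
    fun i hi hik => ?_⟩
  · have h1 : i ≠ 0 := by omega
    have h2 : i + 1 ≠ 0 := by omega
    simp only [h1, h2, if_false]
    have heq : i - 1 + 1 = i := by omega
    have := hychain (i - 1) (by omega)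
    rwa [heq] at this
  · have h1 : i ≠ 0 := by omega
    simp only [h1, if_false]
    exact hypred (i - 1) (by omega)
end

section
/- Let V be finite with distinct positions h and distinct capacities c. Order S⁻(u) = {v : pred⁺₁(v) = u} by position as v₁, v₂, ..., v_k (h(v₁) < ... < h(v_k)). Then the capacities are strictly increasing along this order: c(v₁) < c(v₂) < ... < c(v_k), and moreover succ⁺₁(vᵢ) = vᵢ₊₁ for all 1 ≤ i < k. -/
/-!
Every node `a` placed strictly between `u` and some `b ∈ S⁻(u)` has `c a < c b`: otherwise `a`
would be a larger predecessor of `b` closer than `u`. This gives the monotonicity of capacities.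
For the chain property, let `m = succ⁺₁(a)`, which lies no further than `b`. If `m` were strictly
before `b`, then `c m < c b < c u`; a node before `m` with capacity above `c m` cannot lie after `a`
(minimality of `m`), so it lies before `a` and hence no further than `u`. Thus `m ∈ S⁻(u)` would
sit strictly between `a` and `b`.
-/

section

variable {V : Type*} {h c : V → ℝ} {a b m u : V}

theorem exists_isSucc_s17 [Finite V] (hb : h a < h b ∧ c a < c b) : ∃ m, IsSucc h c a m := by
  obtain ⟨m, ⟨ham, hcam⟩, hmin⟩ :=
    Set.exists_min_image {x | h a < h x ∧ c a < c x} h (Set.toFinite _) ⟨b, hb⟩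
  exact ⟨m, ham, hcam, fun w hw hcw => hmin w ⟨hw, hcw⟩⟩

theorem IsPred.capacity_lt (cinj : Function.Injective c) (hb : IsPred h c b u)
    (hua : h u < h a) (hab : h a < h b) : c a < c b := by
  refine lt_of_le_of_ne (not_lt.mp fun hba => ?_) (cinj.ne fun hab' => hab.ne (by rw [hab']))
  exact (hua.trans_le (hb.2.2 a hab hba)).false

theorem IsPred.of_isSucc (hinj : Function.Injective h) (ha : IsPred h c a u)
    (hm : IsSucc h c a m) (hmu : c m < c u) : IsPred h c m u := by
  refine ⟨ha.1.trans hm.1, hmu, fun x hxm hcx => ?_⟩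
  have hcax : c a < c x := hm.2.1.trans hcx
  rcases lt_trichotomy (h x) (h a) with hxa | hxa | hax
  · exact ha.2.2 x hxa hcax
  · exact absurd (hinj hxa ▸ hcx) (lt_asymm hm.2.1)
  · exact absurd (hm.2.2 x hax hcax) (not_le.mpr hxm)

end

/-- Ordering `S⁻(u) = {v : pred⁺₁(v) = u}` by position, the capacities are
strictly increasing, and consecutive elements (in position order) are linked
by `succ⁺₁`. -/
theorem sminus_sorted_chain {V : Type*} [Fintype V]
    (h c : V → ℝ) (hinj : Function.Injective h) (cinj : Function.Injective c)
    (u : V) :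
    (∀ a b : V, IsPred h c a u → IsPred h c b u → h a < h b → c a < c b) ∧
    (∀ a b : V, IsPred h c a u → IsPred h c b u → h a < h b →
      (∀ d : V, IsPred h c d u → ¬(h a < h d ∧ h d < h b)) →
      IsSucc h c a b) := by
  refine ⟨fun a b ha hb hab => hb.capacity_lt cinj ha.1 hab, fun a b ha hb hab hgap => ?_⟩
  have hcab : c a < c b := hb.capacity_lt cinj ha.1 hab
  obtain ⟨m, hm⟩ := exists_isSucc_s17 ⟨hab, hcab⟩
  have hbm : h b ≤ h m := by
    by_contra! hmb
    have hcmb : c m < c b := hb.capacity_lt cinj (ha.1.trans hm.1) hmb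
    exact hgap m (ha.of_isSucc hinj hm (hcmb.trans hb.2.1)) ⟨hm.1, hmb⟩
  exact ⟨hab, hcab, fun w hw hcw => hbm.trans (hm.2.2 w hw hcw)⟩
end
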